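/- arXiv:cs/0402005 — 3 statements merged into one kernel-verified Lean document; each statement's English description precedes it below -/
import Mathlib

section
/- Let S be a uniformly random subset of size s of a totally ordered multiset S₊ of size s₊, with s ≤ s₊. Let y*₁ ≤ … ≤ y*ₛ be the sorted elements of S and z*₁ ≤ … ≤ z*_{s₊} those of S₊. Fix θ ∈ [0,1], g ≥ 0, g₊ ≥ 0 with g − g₊·s/s₊ ≥ (1−κ)g for some κ ∈ (0,1). If i_u = ⌈θs − g⌉ ≥ 1 and i_u⁺ := max{⌈θs₊ − g₊⌉, 1}, then P[z*_{i_u⁺} < y*_{i_u}] ≤ exp(−2(1−κ)²g²/s). -/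
/-!
Let `z` be the `i_u⁺`-th smallest of all values and `L` the set of indices whose value is at
most `z`, so `#L ≥ i_u⁺`. If `z` lies below the `i_u`-th smallest value of the sample `S`, then
`S` meets `L` in at most `i_u - 1` points, whereas `#(S ∩ L)` is hypergeometric with mean
`s #L / s₊ ≥ i_u - 1 + (1 - κ) g`. Hoeffding's tail bound for sampling without replacement
concludes.

That bound comes from Chernoff's method and Chvátal's estimate
`E (1 + u) ^ #(S ∩ L) ≤ (1 + u #L / s₊) ^ s`, proved by expanding `(1 + u) ^ #(S ∩ L)` over the
subsets `T ⊆ S ∩ L`, exchanging the sums and counting the `s`-sets containing each `T`. The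
factor `1 - p + p e^λ` it produces is bounded by Hoeffding's lemma for a Bernoulli variable.
-/

/-- The `i`-th smallest element (1-based) of a multiset of reals. -/
noncomputable def kthSmallest (M : Multiset ℝ) (i : ℕ) : ℝ :=
  (M.sort (· ≤ ·)).getD (i - 1) 0

open Finset Real ProbabilityTheory MeasureTheory

theorem List.Pairwise.lt_countP_le_iff {β : Type*} [LinearOrder β] {l : List β}
    (hl : l.Pairwise (· ≤ ·)) {i : ℕ} (hi : i < l.length) (z : β) :
    i < l.countP (· ≤ z) ↔ l[i] ≤ z := by
  induction l generalizing i with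
  | nil => simp at hi
  | cons a l ih =>
    rw [List.pairwise_cons] at hl
    by_cases haz : a ≤ z
    · cases i with
      | zero => simp [haz]
      | succ i => simpa [List.countP_cons, haz] using ih hl.2 (by simpa using hi)
    · have hnone : l.countP (· ≤ z) = 0 :=
        List.countP_eq_zero.2 fun b hb hbz => haz ((hl.1 b hb).trans (by simpa using hbz))
      have hget : ¬ (a :: l)[i] ≤ z := by
        cases i with
        | zero => simpa using haz
        | succ i => exact fun h => haz ((hl.1 _ (List.getElem_mem _)).trans (by simpa using h))
      simp [haz, hnone, hget]

theorem le_card_filter_le_iff_kthSmallest_le {M : Multiset ℝ} {i : ℕ} (hi1 : 1 ≤ i)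
    (hi : i ≤ Multiset.card M) (z : ℝ) :
    i ≤ Multiset.card (M.filter (· ≤ z)) ↔ kthSmallest M i ≤ z := by
  have hlen : i - 1 < (M.sort (· ≤ ·)).length := by rw [Multiset.length_sort]; omega
  have hcard : Multiset.card (M.filter (· ≤ z)) = (M.sort (· ≤ ·)).countP (· ≤ z) := by
    conv_lhs => rw [← Multiset.sort_eq M (· ≤ ·)]
    rw [Multiset.filter_coe, Multiset.coe_card, List.countP_eq_length_filter]
  rw [kthSmallest, List.getD_eq_getElem _ _ hlen, hcard,
    ← (Multiset.pairwise_sort M (· ≤ ·)).lt_countP_le_iff hlen]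
  omega

theorem one_sub_add_mul_exp_le {p : ℝ} (hp0 : 0 ≤ p) (hp1 : p ≤ 1) (v : ℝ) :
    1 - p + p * exp v ≤ exp (p * v + v ^ 2 / 8) := by
  have hX : ∀ᵐ y ∂(bernoulliMeasure (1 : ℝ) 0 ⟨p, hp0, hp1⟩), y ∈ Set.Icc 0 1 :=
    ae_iff.2 <| bernoulliMeasure_apply_of_notMem_of_notMem _
      measurableSet_Icc.compl (by simp) (by simp)
  have h : p * exp (v * (1 - p)) + (1 - p) * exp (-(v * p)) ≤ exp (v ^ 2 / 8) := by
    convert (hasSubgaussianMGF_of_mem_Icc aemeasurable_id hX).mgf_le v using 1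
    · simp [mgf, integral_bernoulliMeasure]
    · norm_num
      ring_nf
  calc 1 - p + p * exp v = (p * exp (v * (1 - p)) + (1 - p) * exp (-(v * p))) * exp (p * v) := by
        rw [add_mul, mul_assoc, mul_assoc, ← exp_add, ← exp_add,
          show v * (1 - p) + p * v = v by ring, show -(v * p) + p * v = 0 by ring, exp_zero]
        ring
    _ ≤ exp (v ^ 2 / 8) * exp (p * v) := by gcongr
    _ = exp (p * v + v ^ 2 / 8) := by rw [← exp_add]; ring_nf

theorem Nat.choose_mul_pow_le_choose_mul_pow {K N : ℕ} (hKN : K ≤ N) (j : ℕ) :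
    K.choose j * N ^ j ≤ N.choose j * K ^ j := by
  induction j with
  | zero => simp
  | succ j ih =>
    have hstep : (K - j) * N ≤ (N - j) * K := by
      rcases le_or_gt j K with h | h
      · rw [Nat.sub_mul, Nat.sub_mul, Nat.mul_comm K N]
        have := Nat.mul_le_mul_left j hKN
        omega
      · simp [Nat.sub_eq_zero_of_le h.le]
    refine Nat.le_of_mul_le_mul_right (c := j + 1) ?_ j.succ_pos
    calc K.choose (j + 1) * N ^ (j + 1) * (j + 1)
        = K.choose j * N ^ j * ((K - j) * N) := by
          rw [mul_right_comm, Nat.choose_succ_right_eq]; ring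
      _ ≤ N.choose j * K ^ j * ((N - j) * K) := Nat.mul_le_mul ih hstep
      _ = N.choose (j + 1) * K ^ (j + 1) * (j + 1) := by
          rw [mul_right_comm _ _ (j + 1), Nat.choose_succ_right_eq]; ring

theorem Nat.choose_div_choose_le_div_pow {K N j : ℕ} (hKN : K ≤ N) (hjK : j ≤ K) :
    (K.choose j : ℝ) / N.choose j ≤ ((K : ℝ) / N) ^ j := by
  have hpos : 0 < N.choose j := Nat.choose_pos (hjK.trans hKN)
  have hNj : 0 < N ^ j := hpos.trans_le (Nat.choose_le_pow N j)
  rw [div_pow, div_le_div_iff₀ (by exact_mod_cast hpos) (by exact_mod_cast hNj),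
    mul_comm _ (N.choose j : ℝ)]
  exact_mod_cast Nat.choose_mul_pow_le_choose_mul_pow hKN j

theorem card_filter_le_mul_pow_le_sum_pow {ι : Type*} (F : Finset ι) (f : ι → ℕ) (a : ℕ)
    {y : ℝ} (hy : 1 ≤ y) :
    (#{i ∈ F | a ≤ f i} : ℝ) * y ^ a ≤ ∑ i ∈ F, y ^ f i := by
  rw [← nsmul_eq_mul, ← sum_const]
  calc ∑ i ∈ F with a ≤ f i, y ^ a
      ≤ ∑ i ∈ F with a ≤ f i, y ^ f i :=
        sum_le_sum fun i hi => pow_le_pow_right₀ hy (mem_filter.1 hi).2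
    _ ≤ ∑ i ∈ F, y ^ f i :=
        sum_le_sum_of_subset_of_nonneg (filter_subset _ _) fun _ _ _ => by positivity

theorem sum_range_choose_mul_pow_le (n m : ℕ) {y : ℝ} (hy : 0 ≤ y) :
    ∑ j ∈ range m, (n.choose j : ℝ) * y ^ j ≤ (1 + y) ^ n := by
  calc ∑ j ∈ range m, (n.choose j : ℝ) * y ^ j
      = ∑ j ∈ range (min m (n + 1)), (n.choose j : ℝ) * y ^ j := by
        refine (sum_subset (range_subset_range.2 (min_le_left _ _)) fun j hm hmin => ?_).symm
        simp only [mem_range, lt_min_iff, not_and_or, not_lt] at hm hmin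
        rw [Nat.choose_eq_zero_of_lt (by omega), Nat.cast_zero, zero_mul]
    _ ≤ ∑ j ∈ range (n + 1), (n.choose j : ℝ) * y ^ j :=
        sum_le_sum_of_subset_of_nonneg (range_subset_range.2 (min_le_right _ _))
          fun _ _ _ => by positivity
    _ = (1 + y) ^ n := by
        rw [add_comm 1 y, add_pow]
        simp only [one_pow, mul_one, mul_comm]

section Sampling

variable {α : Type*} [Fintype α] [DecidableEq α]

theorem card_filter_powersetCard_superset_mul_choose (T : Finset α) (n : ℕ) :
    #{S ∈ powersetCard n univ | T ⊆ S} * (Fintype.card α).choose #T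
      = (Fintype.card α).choose n * n.choose #T := by
  rcases le_or_gt #T n with hTn | hnT
  · rw [card_filter_powersetCard_subset T univ n (subset_univ T) hTn, card_univ]
    rw [Nat.choose_mul hTn, mul_comm]
  · rw [Nat.choose_eq_zero_of_lt hnT, mul_zero, mul_eq_zero, card_eq_zero, filter_eq_empty_iff]
    left
    intro S hS hTS
    have := card_le_card hTS
    rw [(mem_powersetCard.1 hS).2] at this
    omega

theorem sum_one_add_pow_card_inter_le (L : Finset α) (n : ℕ) {u : ℝ} (hu : 0 ≤ u) :
    ∑ S ∈ powersetCard n univ, (1 + u) ^ #(S ∩ L)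
      ≤ (Fintype.card α).choose n * (1 + #L / Fintype.card α * u) ^ n := by
  set N := Fintype.card α
  have hsuperset (T : Finset α) : (#{S ∈ powersetCard n univ | T ⊆ S} : ℝ)
      = N.choose n * n.choose #T / N.choose #T := by
    have hpos : 0 < N.choose #T := Nat.choose_pos (card_le_univ T)
    rw [eq_div_iff (by positivity)]
    exact_mod_cast card_filter_powersetCard_superset_mul_choose T n
  have hratio (j : ℕ) (hj : j ≤ #L) :
      ((#L).choose j : ℝ) * (N.choose n * n.choose j / N.choose j * u ^ j)
        ≤ N.choose n * (n.choose j * (#L / N * u) ^ j) := by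
    have hfrac := Nat.choose_div_choose_le_div_pow (card_le_univ L) hj
    calc ((#L).choose j : ℝ) * (N.choose n * n.choose j / N.choose j * u ^ j)
        = N.choose n * n.choose j * u ^ j * (((#L).choose j : ℝ) / N.choose j) := by ring
      _ ≤ N.choose n * n.choose j * u ^ j * ((#L : ℝ) / N) ^ j := by gcongr
      _ = N.choose n * (n.choose j * (#L / N * u) ^ j) := by ring
  calc ∑ S ∈ powersetCard n univ, (1 + u) ^ #(S ∩ L)
      = ∑ S ∈ powersetCard n univ, ∑ T ∈ (S ∩ L).powerset, u ^ #T := by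
        refine sum_congr rfl fun S _ => ?_
        rw [add_comm, ← sum_pow_mul_eq_add_pow]
        simp only [one_pow, mul_one]
    _ = ∑ T ∈ L.powerset, ∑ S ∈ powersetCard n univ with T ⊆ S, u ^ #T :=
        sum_comm' fun S T => by
          simp only [mem_powerset, subset_inter_iff, mem_filter]
          tauto
    _ = ∑ T ∈ L.powerset, N.choose n * n.choose #T / N.choose #T * u ^ #T := by
        simp only [sum_const, nsmul_eq_mul, hsuperset]
    _ = ∑ j ∈ range (#L + 1),
          ((#L).choose j : ℝ) * (N.choose n * n.choose j / N.choose j * u ^ j) := by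
        rw [sum_powerset_apply_card (fun j => (N.choose n * n.choose j / N.choose j * u ^ j : ℝ))]
        simp only [nsmul_eq_mul]
    _ ≤ ∑ j ∈ range (#L + 1), (N.choose n : ℝ) * (n.choose j * (#L / N * u) ^ j) :=
        sum_le_sum fun j hj => hratio j (Nat.lt_succ_iff.1 (mem_range.1 hj))
    _ ≤ N.choose n * (1 + #L / N * u) ^ n := by
        rw [← mul_sum]
        gcongr
        exact sum_range_choose_mul_pow_le n _ (by positivity)

theorem card_filter_le_card_inter_le (L : Finset α) {n a : ℕ} (hn : 0 < n) {t : ℝ}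
    (ht : 0 ≤ t) (ha : n * #L / Fintype.card α + t ≤ a) :
    (#{S ∈ powersetCard n univ | a ≤ #(S ∩ L)} : ℝ)
      ≤ (Fintype.card α).choose n * exp (-2 * t ^ 2 / n) := by
  set N := Fintype.card α
  set p : ℝ := #L / N
  set r : ℝ := 4 * t / n
  have hr : 0 ≤ r := by positivity
  have hp0 : 0 ≤ p := by positivity
  have hp1 : p ≤ 1 := div_le_one_of_le₀ (by exact_mod_cast card_le_univ L) (Nat.cast_nonneg N)
  have hmgf : ∑ S ∈ powersetCard n univ, exp r ^ #(S ∩ L)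
      ≤ N.choose n * exp (n * (p * r + r ^ 2 / 8)) := by
    rw [← add_sub_cancel 1 (exp r), exp_nat_mul]
    refine (sum_one_add_pow_card_inter_le L n (by linarith [one_le_exp hr])).trans ?_
    gcongr
    · exact add_nonneg zero_le_one (mul_nonneg hp0 (sub_nonneg.2 (one_le_exp hr)))
    · linarith [one_sub_add_mul_exp_le hp0 hp1 r]
  have hexponent : n * (p * r + r ^ 2 / 8) - a * r ≤ -2 * t ^ 2 / n := by
    have hmean : (n * p + t) * r ≤ a * r := by
      gcongr
      rwa [mul_div_assoc']
    have hn' : (0 : ℝ) < n := by exact_mod_cast hn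
    have : n * (p * r + r ^ 2 / 8) - (n * p + t) * r = -2 * t ^ 2 / n := by
      simp only [r]
      field_simp
      ring
    linarith
  calc (#{S ∈ powersetCard n univ | a ≤ #(S ∩ L)} : ℝ)
      = #{S ∈ powersetCard n univ | a ≤ #(S ∩ L)} * exp r ^ a * exp (-(a * r)) := by
        rw [← exp_nat_mul, mul_assoc, ← exp_add, add_neg_cancel, exp_zero, mul_one]
    _ ≤ N.choose n * exp (n * (p * r + r ^ 2 / 8)) * exp (-(a * r)) := by
        exact mul_le_mul_of_nonneg_right
          ((card_filter_le_mul_pow_le_sum_pow _ _ a (one_le_exp hr)).trans hmgf) (exp_pos _).le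
    _ ≤ N.choose n * exp (-2 * t ^ 2 / n) := by
        rw [mul_assoc, ← exp_add]
        gcongr
        linarith

theorem card_filter_card_inter_le_le (L : Finset α) {n k : ℕ} (hn : 0 < n)
    (hnN : n ≤ Fintype.card α) {t : ℝ} (ht : 0 ≤ t)
    (hk : k + t ≤ n * #L / Fintype.card α) :
    (#{S ∈ powersetCard n univ | #(S ∩ L) ≤ k} : ℝ)
      ≤ (Fintype.card α).choose n * exp (-2 * t ^ 2 / n) := by
  have hN : (0 : ℝ) < Fintype.card α := by exact_mod_cast hn.trans_le hnN
  have hLN : (#L : ℝ) ≤ Fintype.card α := by exact_mod_cast card_le_univ L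
  have hkn : k ≤ n := by
    have : (n : ℝ) * #L / Fintype.card α ≤ n := by
      rw [div_le_iff₀ hN]; exact mul_le_mul_of_nonneg_left hLN (Nat.cast_nonneg n)
    exact_mod_cast (le_add_of_nonneg_right ht).trans (hk.trans this)
  have hcompl : {S ∈ powersetCard n (univ : Finset α) | #(S ∩ L) ≤ k}
      = {S ∈ powersetCard n (univ : Finset α) | n - k ≤ #(S ∩ Lᶜ)} := by
    refine filter_congr fun S hS => ?_
    have := card_inter_add_card_sdiff S L
    rw [sdiff_eq_inter_compl, (mem_powersetCard.1 hS).2] at this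
    omega
  rw [hcompl]
  refine card_filter_le_card_inter_le Lᶜ hn ht ?_
  rw [card_compl, Nat.cast_sub (card_le_univ L), Nat.cast_sub hkn, mul_sub, sub_div,
    mul_div_cancel_right₀ _ hN.ne']
  linarith

theorem le_card_inter_iff_kthSmallest_le (x : α → ℝ) {S : Finset α} {i : ℕ} (hi1 : 1 ≤ i)
    (hi : i ≤ #S) (z : ℝ) :
    i ≤ #(S ∩ ({a | x a ≤ z} : Finset α)) ↔ kthSmallest (S.val.map x) i ≤ z := by
  rw [← le_card_filter_le_iff_kthSmallest_le hi1 (by simpa using hi), Multiset.filter_map,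
    Multiset.card_map, inter_filter, inter_univ]
  rfl

theorem filter_lt_kthSmallest_subset (x : α → ℝ) {n i : ℕ} (hi1 : 1 ≤ i) (hin : i ≤ n)
    (z : ℝ) :
    {S ∈ powersetCard n (univ : Finset α) | z < kthSmallest (S.val.map x) i}
      ⊆ {S ∈ powersetCard n (univ : Finset α) |
          #(S ∩ ({a | x a ≤ z} : Finset α)) ≤ i - 1} := by
  refine monotone_filter_right _ fun S hS hlt => ?_
  have := mt (le_card_inter_iff_kthSmallest_le x hi1
    (hin.trans_eq (mem_powersetCard.1 hS).2.symm) z).1 (not_le.2 hlt)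
  omega

end Sampling

theorem Int.ceil_mul_sub_le_natCast {θ g : ℝ} (hθ : θ ≤ 1) (hg : 0 ≤ g) (n : ℕ) :
    ⌈θ * n - g⌉ ≤ n :=
  Int.ceil_le.2 (by push_cast; nlinarith [n.cast_nonneg (α := ℝ)])

theorem sub_one_add_le_mul_div_of_eq_ceil {s N i : ℕ} {θ g gplus κ m : ℝ} (hN : 0 < N)
    (hi : (i : ℤ) = ⌈θ * s - g⌉) (hm : θ * N - gplus ≤ m)
    (hgap : (1 - κ) * g ≤ g - gplus * s / N) :
    (i : ℝ) - 1 + (1 - κ) * g ≤ s * m / N := by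
  have hi' : ((i : ℤ) : ℝ) < θ * s - g + 1 := hi ▸ Int.ceil_lt_add_one _
  have : s * (θ * N - gplus) / N ≤ s * m / N := by gcongr
  have : s * (θ * N - gplus) / N = θ * s - gplus * s / N := by field_simp
  push_cast at hi'
  linarith

/-- If `S` is a uniformly random `s`-subset of the `s₊`-element multiset `S₊` and
`i_u = ⌈θs − g⌉ ≥ 1`, `i_u⁺ = max{⌈θs₊ − g₊⌉, 1}`, with `g − g₊·s/s₊ ≥ (1−κ)g`, then
`P[z*_{i_u⁺} < y*_{i_u}] ≤ exp(−2(1−κ)²g²/s)`. -/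
theorem pivot_below_prob (s splus : ℕ) (hs : 0 < s) (hss : s ≤ splus)
    (x : Fin splus → ℝ) (θ g gplus κ : ℝ) (hθ : θ ∈ Set.Icc (0 : ℝ) 1)
    (hg : 0 ≤ g) (hgp : 0 ≤ gplus) (hκ : κ ∈ Set.Ioo (0 : ℝ) 1)
    (hgap : (1 - κ) * g ≤ g - gplus * (s : ℝ) / (splus : ℝ))
    (iu : ℕ) (hiu : (iu : ℤ) = ⌈θ * (s : ℝ) - g⌉) (hiu1 : 1 ≤ iu)
    (iup : ℕ) (hiup : (iup : ℤ) = max ⌈θ * (splus : ℝ) - gplus⌉ 1) :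
    ((((Finset.univ : Finset (Fin splus)).powersetCard s).filter
        (fun S : Finset (Fin splus) =>
          kthSmallest ((Finset.univ : Finset (Fin splus)).val.map x) iup
            < kthSmallest (S.val.map x) iu)).card : ℝ)
      / ((((Finset.univ : Finset (Fin splus)).powersetCard s)).card : ℝ)
      ≤ Real.exp (-2 * (1 - κ) ^ 2 * g ^ 2 / (s : ℝ)) := by
  have hiu_le : iu ≤ s := by
    have := Int.ceil_mul_sub_le_natCast hθ.2 hg s
    omega
  have hiup_le : iup ≤ splus := by
    have := Int.ceil_mul_sub_le_natCast hθ.2 hgp splus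
    omega
  set z := kthSmallest ((univ : Finset (Fin splus)).val.map x) iup
  set L : Finset (Fin splus) := {a | x a ≤ z}
  have hL : iup ≤ #L := by
    simpa using (le_card_inter_iff_kthSmallest_le x (S := univ) (by omega) (by simpa) z).2 le_rfl
  have hmean : ((iu - 1 : ℕ) : ℝ) + (1 - κ) * g ≤ s * #L / Fintype.card (Fin splus) := by
    have hceil : ⌈θ * (splus : ℝ) - gplus⌉ ≤ #L := by omega
    rw [Fintype.card_fin, Nat.cast_sub hiu1, Nat.cast_one]
    exact sub_one_add_le_mul_div_of_eq_ceil (hs.trans_le hss) hiu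
      ((Int.le_ceil _).trans (by exact_mod_cast hceil)) hgap
  have htail := card_filter_card_inter_le_le L hs (by simpa using hss)
    (mul_nonneg (by linarith [hκ.2]) hg) hmean
  rw [card_powersetCard, card_univ, Fintype.card_fin,
    div_le_iff₀ (by exact_mod_cast Nat.choose_pos hss)]
  calc _ ≤ (#{S ∈ powersetCard s univ | #(S ∩ L) ≤ iu - 1} : ℝ) := by
        exact_mod_cast card_le_card (filter_lt_kthSmallest_subset x hiu1 hiu_le z)
    _ ≤ _ := by simpa [mul_pow, mul_assoc, mul_comm] using htail
end

section
/- Let r > 1, β > 0, s₁ ≥ 1, n > 0 with n ≤ r^{2 l̄} s₁ and n > r^{2(l̄−1)} s₁ for an integer l̄ ≥ 1, and set d := (β ln n)^{1/2}, s_l := r^{2(l−1)} s₁ for l ≤ l̄, s_{l̄+1} := n, and g_l := (β s_l ln n)^{1/2}. Then ∑_{l=1}^{l̄} g_l · s_{l+1}/s_l < β^{1/2} (n ln n)^{1/2} · (2r² − r)/(r − 1). -/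
/-!
Writing `g_l = √(β ln n) · √s_l`, the `l`-th summand is `√(β ln n) · s_{l+1} / √s_l`.
For `l < l̄` this is `√(β ln n) · √s₁ · r^{l+1}`, a geometric progression whose sum is below
`√(β ln n) · √s₁ · r^{l̄+1} / (r - 1) ≤ √(β ln n) · √n · r² / (r - 1)`, as `√s₁ · r^{l̄-1} < √n`.
The last summand is `√(β ln n) · n / (r^{l̄-1} √s₁) ≤ √(β ln n) · r √n`, as `√n ≤ r^{l̄} √s₁`.
Finally `r² / (r - 1) + r = (2r² - r) / (r - 1)`.
-/

open Finset Real

lemma sqrt_mul_mul_div_self (β L : ℝ) {s : ℝ} (hs : 0 < s) (t : ℝ) :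
    √(β * s * L) * t / s = √(β * L) * (t / √s) := by
  rw [show β * s * L = β * L * s by ring, sqrt_mul' _ hs.le]
  field_simp
  rw [sq_sqrt hs.le]
  ring

lemma sqrt_pow_two_mul_mul {r : ℝ} (hr : 0 ≤ r) (s : ℝ) (k : ℕ) :
    √(r ^ (2 * k) * s) = r ^ k * √s := by
  rw [sqrt_mul (by positivity), pow_mul', sqrt_sq (by positivity)]

lemma sum_Icc_pow_succ_mul_sub_one {R : Type*} [CommRing R] (r : R) (m : ℕ) :
    (∑ l ∈ Icc 1 m, r ^ (l + 1)) * (r - 1) = r ^ (m + 2) - r ^ 2 := by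
  induction m with
  | zero => simp
  | succ m ih =>
    rw [sum_Icc_succ_top (by omega), add_mul, ih]
    ring

lemma sum_Icc_pow_succ_lt {r : ℝ} (hr : 1 < r) (m : ℕ) :
    ∑ l ∈ Icc 1 m, r ^ (l + 1) < r ^ (m + 2) / (r - 1) := by
  rw [lt_div_iff₀ (sub_pos.mpr hr), sum_Icc_pow_succ_mul_sub_one]
  have : 0 < r ^ 2 := by positivity
  linarith

lemma pow_two_mul_div_sqrt {r s₁ : ℝ} (hr : 0 < r) (hs₁ : 0 < s₁) (k : ℕ) :
    r ^ (2 * (k + 1)) * s₁ / √(r ^ (2 * k) * s₁) = √s₁ * r ^ (k + 2) := by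
  have hs : 0 < √s₁ := sqrt_pos.mpr hs₁
  rw [sqrt_pow_two_mul_mul hr.le s₁, div_eq_iff (by positivity)]
  nth_rw 1 [← mul_self_sqrt hs₁.le]
  ring

lemma div_sqrt_pow_two_mul_le {r s₁ N : ℝ} (hr : 0 < r) (hs₁ : 0 < s₁) (hN : 0 ≤ N) {m : ℕ}
    (hub : N ≤ r ^ (2 * (m + 1)) * s₁) :
    N / √(r ^ (2 * m) * s₁) ≤ r * √N := by
  have hub' : √N ≤ r ^ (m + 1) * √s₁ := by
    simpa only [sqrt_pow_two_mul_mul hr.le s₁] using sqrt_le_sqrt hub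
  have hs : 0 < √s₁ := sqrt_pos.mpr hs₁
  rw [sqrt_pow_two_mul_mul hr.le s₁, div_le_iff₀ (by positivity)]
  calc N = √N * √N := (mul_self_sqrt hN).symm
    _ ≤ √N * (r ^ (m + 1) * √s₁) := by gcongr
    _ = r * √N * (r ^ m * √s₁) := by ring

lemma sum_Icc_div_sqrt_lt {r s₁ N : ℝ} (hr : 1 < r) (hs₁ : 0 < s₁) {m : ℕ}
    (hlb : r ^ (2 * m) * s₁ < N) (hub : N ≤ r ^ (2 * (m + 1)) * s₁) (s : ℕ → ℝ)
    (hs : ∀ l, 1 ≤ l → l ≤ m + 1 → s l = r ^ (2 * (l - 1)) * s₁) (hsN : s (m + 1 + 1) = N) :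
    ∑ l ∈ Icc 1 (m + 1), s (l + 1) / √(s l) < √N * (2 * r ^ 2 - r) / (r - 1) := by
  have hr0 : 0 < r := by linarith
  have hN : 0 < N := lt_of_le_of_lt (by positivity) hlb
  have hlb' : r ^ m * √s₁ < √N := by
    simpa only [sqrt_pow_two_mul_mul hr0.le s₁] using sqrt_lt_sqrt (by positivity) hlb
  have hmiddle :
      ∑ l ∈ Icc 1 m, s (l + 1) / √(s l) = √s₁ * ∑ l ∈ Icc 1 m, r ^ (l + 1) := by
    rw [mul_sum]
    refine sum_congr rfl fun l hl => ?_
    rw [mem_Icc] at hl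
    obtain ⟨k, rfl⟩ : ∃ k, l = k + 1 := ⟨l - 1, by omega⟩
    rw [hs (k + 1) (by omega) (by omega), hs (k + 1 + 1) (by omega) (by omega)]
    exact pow_two_mul_div_sqrt hr0 hs₁ k
  have hlast : s (m + 1 + 1) / √(s (m + 1)) ≤ r * √N := by
    rw [hsN, hs (m + 1) (by omega) le_rfl]
    exact div_sqrt_pow_two_mul_le hr0 hs₁ hN.le hub
  have hgeom : √s₁ * ∑ l ∈ Icc 1 m, r ^ (l + 1) < √N * (r ^ 2 / (r - 1)) :=
    calc √s₁ * ∑ l ∈ Icc 1 m, r ^ (l + 1)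
        < √s₁ * (r ^ (m + 2) / (r - 1)) := by
          gcongr
          exact sum_Icc_pow_succ_lt hr m
      _ = r ^ m * √s₁ * (r ^ 2 / (r - 1)) := by ring
      _ ≤ √N * (r ^ 2 / (r - 1)) := by gcongr
  have hr1 : r - 1 ≠ 0 := by linarith
  calc ∑ l ∈ Icc 1 (m + 1), s (l + 1) / √(s l)
      < √N * (r ^ 2 / (r - 1)) + r * √N := by
        rw [sum_Icc_succ_top (by omega), hmiddle]
        linarith
    _ = √N * (2 * r ^ 2 - r) / (r - 1) := by
        field_simp
        ring

theorem sum_gap_bound_general (r β s₁ : ℝ) (hr : 1 < r) (hβ : 0 < β) (hs₁ : 1 ≤ s₁)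
    (n : ℕ) (lbar : ℕ) (hl : 1 ≤ lbar)
    (hub : (n : ℝ) ≤ r ^ (2 * lbar) * s₁)
    (hlb : r ^ (2 * (lbar - 1)) * s₁ < (n : ℝ))
    (sfun : ℕ → ℝ)
    (hsf : ∀ l, 1 ≤ l → l ≤ lbar → sfun l = r ^ (2 * (l - 1)) * s₁)
    (hsf' : sfun (lbar + 1) = (n : ℝ)) :
    ∑ l ∈ Finset.Icc 1 lbar,
        Real.sqrt (β * sfun l * Real.log n) * sfun (l + 1) / sfun l
      < Real.sqrt β * Real.sqrt ((n : ℝ) * Real.log n)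
          * (2 * r ^ 2 - r) / (r - 1) := by
  obtain ⟨m, rfl⟩ : ∃ m, lbar = m + 1 := ⟨lbar - 1, by omega⟩
  rw [Nat.add_sub_cancel] at hlb
  have hs₁0 : 0 < s₁ := by linarith
  have hn : (1 : ℝ) < n := by
    have : s₁ ≤ r ^ (2 * m) * s₁ := le_mul_of_one_le_left hs₁0.le (one_le_pow₀ hr.le)
    linarith
  have hK : 0 < √(β * log n) := sqrt_pos.mpr (mul_pos hβ (log_pos hn))
  have hpos : ∀ l ∈ Icc 1 (m + 1), 0 < sfun l := fun l hl => by
    rw [mem_Icc] at hl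
    rw [hsf l hl.1 hl.2]
    positivity
  rw [sum_congr rfl fun l hl => sqrt_mul_mul_div_self β (log n) (hpos l hl) _, ← mul_sum]
  calc √(β * log n) * ∑ l ∈ Icc 1 (m + 1), sfun (l + 1) / √(sfun l)
      < √(β * log n) * (√n * (2 * r ^ 2 - r) / (r - 1)) :=
        mul_lt_mul_of_pos_left (sum_Icc_div_sqrt_lt hr hs₁0 hlb hub sfun hsf hsf') hK
    _ = √β * √(n * log n) * (2 * r ^ 2 - r) / (r - 1) := by
        rw [sqrt_mul hβ.le, sqrt_mul (Nat.cast_nonneg n)]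
        ring

/-- With geometric sample sizes `s_l = r^{2(l−1)}s₁` (`l ≤ l̄`), `s_{l̄+1} = n`,
`r^{2(l̄−1)}s₁ < n ≤ r^{2l̄}s₁`, and gaps `g_l = (β s_l ln n)^{1/2}`:
`∑_{l=1}^{l̄} g_l s_{l+1}/s_l < β^{1/2}(n ln n)^{1/2}(2r²−r)/(r−1)`. -/
theorem sum_gap_bound (r β s₁ : ℝ) (hr : 1 < r) (hβ : 0 < β) (hs₁ : 1 ≤ s₁)
    (n : ℕ) (hn : 0 < n) (lbar : ℕ) (hl : 1 ≤ lbar)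
    (hub : (n : ℝ) ≤ r ^ (2 * lbar) * s₁)
    (hlb : r ^ (2 * (lbar - 1)) * s₁ < (n : ℝ))
    (sfun : ℕ → ℝ)
    (hsf : ∀ l, 1 ≤ l → l ≤ lbar → sfun l = r ^ (2 * (l - 1)) * s₁)
    (hsf' : sfun (lbar + 1) = (n : ℝ)) :
    ∑ l ∈ Finset.Icc 1 lbar,
        Real.sqrt (β * sfun l * Real.log n) * sfun (l + 1) / sfun l
      < Real.sqrt β * Real.sqrt ((n : ℝ) * Real.log n)
          * (2 * r ^ 2 - r) / (r - 1) :=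
  sum_gap_bound_general r β s₁ hr hβ hs₁ n lbar hl hub hlb sfun hsf hsf'
end

section
/- Fix α ∈ (0, 1/2], r > 1, η̄ ∈ (1/r², 1], and let n be an integer with n ≥ max{ (r²/(η̄ r² − 1))^{1/α}, 3 }. Define l̄ := ⌈(1 − α) ln n / ln r²⌉ and s₁ := ⌈ n / r^{2l̄} ⌉. Then: (a) n^α/r² ≤ s₁ ≤ ⌈n^α⌉ < n; (b) l̄ = ⌈ ln(n/s₁) / ln r² ⌉; and (c) r^{2(l̄−1)} s₁ < η n where η := r^{−2} + n^{−α} ≤ η̄. -/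
/-! With `q = r²` and `x = n^{1-α}`, the definition of `l̄` says exactly `q^{l̄-1} < x ≤ q^{l̄}`.
Hence `s₁ = ⌈n/q^{l̄}⌉` lies between `n/(qx) = n^α/q` and `⌈n/x⌉ = ⌈n^α⌉`, and
`q^{l̄-1}s₁ < q^{l̄-1}(n/q^{l̄} + 1) < n/q + x = (1/q + n^{-α}) n`. The lower bound on `n` is
`n^{-α} ≤ η̄ - 1/q`, so this is below `η̄ n ≤ n`, which together with `n/s₁ ≤ q^{l̄}` pins
`⌈log_q (n/s₁)⌉` to `l̄`. -/

open Real

lemma ceil_log_div_log_eq_iff {b y : ℝ} (hb : 1 < b) (hy : 0 < y) {l : ℤ} :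
    ⌈log y / log b⌉ = l ↔ b ^ (l - 1) < y ∧ y ≤ b ^ l := by
  have hb0 : 0 < b := zero_lt_one.trans hb
  have hlogb : 0 < log b := log_pos hb
  rw [Int.ceil_eq_iff, lt_div_iff₀ hlogb, div_le_iff₀ hlogb,
    ← log_lt_log_iff (zpow_pos hb0 _) hy, ← log_le_log_iff hy (zpow_pos hb0 _),
    log_zpow, log_zpow]
  push_cast
  rfl

lemma ceil_natCast_rpow_lt_of_le_half {n : ℕ} (hn : 3 ≤ n) {α : ℝ} (hα : α ≤ 1 / 2) :
    ⌈(n : ℝ) ^ α⌉ < (n : ℤ) := by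
  have hn' : (3 : ℝ) ≤ n := by exact_mod_cast hn
  have hsqrt : √(n : ℝ) ≤ n - 1 :=
    sqrt_le_iff.2 ⟨by linarith, by nlinarith⟩
  have hle : (n : ℝ) ^ α ≤ n - 1 :=
    calc (n : ℝ) ^ α ≤ (n : ℝ) ^ (1 / 2 : ℝ) := rpow_le_rpow_of_exponent_le (by linarith) hα
      _ = √(n : ℝ) := (sqrt_eq_rpow _).symm
      _ ≤ n - 1 := hsqrt
  have : ⌈(n : ℝ) ^ α⌉ ≤ (n : ℤ) - 1 := Int.ceil_le.2 (by push_cast; exact hle)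
  omega

lemma one_div_add_inv_le_of_div_le {q η t : ℝ} (hq : 0 < q) (hηq : 1 < η * q)
    (ht : q / (η * q - 1) ≤ t) : 1 / q + t⁻¹ ≤ η := by
  have hpos : 0 < q / (η * q - 1) := div_pos hq (by linarith)
  calc 1 / q + t⁻¹ ≤ 1 / q + (q / (η * q - 1))⁻¹ := by gcongr
    _ = η := by field_simp; ring

section CeilDivZpow

variable {q x N : ℝ} {l : ℤ}

lemma ceil_div_zpow_le_ceil_div (hN : 0 ≤ N) (hx : 0 < x) (hxl : x ≤ q ^ l) :
    ⌈N / q ^ l⌉ ≤ ⌈N / x⌉ :=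
  Int.ceil_le_ceil (div_le_div_of_nonneg_left hN hx hxl)

lemma div_div_lt_ceil_div_zpow (hq : 0 < q) (hN : 0 < N) (hlx : q ^ (l - 1) < x) :
    N / x / q < ⌈N / q ^ l⌉ := by
  have hql : q ^ l = q ^ (l - 1) * q := by rw [← zpow_add_one₀ hq.ne', sub_add_cancel]
  calc N / x / q = N / (x * q) := div_div _ _ _
    _ < N / q ^ l := by
      rw [hql]; gcongr
    _ ≤ ⌈N / q ^ l⌉ := Int.le_ceil _

lemma zpow_sub_one_mul_ceil_div_zpow_lt (hq : 0 < q) (hlx : q ^ (l - 1) < x) :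
    q ^ (l - 1) * ⌈N / q ^ l⌉ < N / q + x := by
  have hpos : 0 < q ^ (l - 1) := zpow_pos hq _
  calc q ^ (l - 1) * ⌈N / q ^ l⌉ < q ^ (l - 1) * (N / q ^ l + 1) := by
        gcongr; exact Int.ceil_lt_add_one _
    _ = N / q + q ^ (l - 1) := by
        rw [zpow_sub_one₀ hq.ne']; field_simp
    _ < N / q + x := by gcongr

lemma ceil_log_div_ceil_div_zpow (hq : 1 < q) (hN : 0 < N)
    (h : q ^ (l - 1) * ⌈N / q ^ l⌉ < N) :
    ⌈log (N / ⌈N / q ^ l⌉) / log q⌉ = l := by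
  have hql : 0 < q ^ l := zpow_pos (zero_lt_one.trans hq) _
  have hs : N / q ^ l ≤ ⌈N / q ^ l⌉ := Int.le_ceil _
  have hs0 : (0 : ℝ) < ⌈N / q ^ l⌉ := (div_pos hN hql).trans_le hs
  refine (ceil_log_div_log_eq_iff hq (div_pos hN hs0)).2 ⟨?_, ?_⟩
  · rwa [lt_div_iff₀ hs0]
  · rwa [div_le_iff₀ hs0, mul_comm, ← div_le_iff₀ hql]

end CeilDivZpow

/-- Rounded parameter choices of the practical Select: with
`l̄ = ⌈(1−α) ln n/ln r²⌉` and `s₁ = ⌈n/r^{2l̄}⌉`, one has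
(a) `n^α/r² ≤ s₁ ≤ ⌈n^α⌉ < n`; (b) `l̄ = ⌈ln(n/s₁)/ln r²⌉`; and
(c) `r^{2(l̄−1)}s₁ < ηn` where `η = r^{−2} + n^{−α} ≤ η̄`. -/
theorem rounded_parameters (α r ηbar : ℝ) (hα : α ∈ Set.Ioc (0 : ℝ) (1 / 2))
    (hr : 1 < r) (hη : ηbar ∈ Set.Ioc (1 / r ^ 2) 1) (n : ℕ)
    (hn : (r ^ 2 / (ηbar * r ^ 2 - 1)) ^ ((1 : ℝ) / α) ≤ (n : ℝ)) (hn3 : 3 ≤ n)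
    (lbar s₁ : ℤ)
    (hlbar : lbar = ⌈(1 - α) * Real.log n / Real.log (r ^ 2)⌉)
    (hs₁ : s₁ = ⌈(n : ℝ) / r ^ (2 * lbar)⌉) :
    ((n : ℝ) ^ α / r ^ 2 ≤ (s₁ : ℝ) ∧ s₁ ≤ ⌈((n : ℝ) ^ α)⌉ ∧ ⌈((n : ℝ) ^ α)⌉ < (n : ℤ))
      ∧ lbar = ⌈Real.log ((n : ℝ) / (s₁ : ℝ)) / Real.log (r ^ 2)⌉
      ∧ (r ^ (2 * (lbar - 1)) * (s₁ : ℝ) < (1 / r ^ 2 + (n : ℝ) ^ (-α)) * (n : ℝ)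
          ∧ 1 / r ^ 2 + (n : ℝ) ^ (-α) ≤ ηbar) := by
  obtain ⟨hα0, hα2⟩ := hα
  obtain ⟨hη1, hη2⟩ := hη
  have hq : 1 < r ^ 2 := one_lt_pow₀ hr two_ne_zero
  have hq0 : 0 < r ^ 2 := zero_lt_one.trans hq
  have hn0 : (0 : ℝ) < n := by positivity
  have hsq : ∀ m : ℤ, r ^ (2 * m) = (r ^ 2) ^ m := fun m => by rw [zpow_mul]; rfl
  rw [hsq] at hs₁ ⊢
  subst hs₁
  obtain ⟨hlx, hxl⟩ :=
    (ceil_log_div_log_eq_iff (l := lbar) hq (rpow_pos_of_pos hn0 (1 - α))).1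
      (by rw [log_rpow hn0]; exact hlbar.symm)
  have hnx : (n : ℝ) / (n : ℝ) ^ (1 - α) = (n : ℝ) ^ α := by
    rw [rpow_sub hn0, rpow_one, div_div_cancel₀ hn0.ne']
  have hη : 1 / r ^ 2 + (n : ℝ) ^ (-α) ≤ ηbar := by
    have hηq : 1 < ηbar * r ^ 2 := by rwa [div_lt_iff₀ hq0] at hη1
    rw [rpow_neg hn0.le]
    refine one_div_add_inv_le_of_div_le hq0 hηq ?_
    exact (rpow_inv_le_iff_of_pos (div_pos hq0 (sub_pos.2 hηq)).le hn0.le hα0).1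
      (by rwa [← one_div])
  have hc : (r ^ 2) ^ (lbar - 1) * ⌈(n : ℝ) / (r ^ 2) ^ lbar⌉ <
      (1 / r ^ 2 + (n : ℝ) ^ (-α)) * n := by
    convert zpow_sub_one_mul_ceil_div_zpow_lt (N := (n : ℝ)) hq0 hlx using 1
    rw [rpow_neg hn0.le, ← hnx, rpow_sub hn0, rpow_one]
    field_simp
  refine ⟨⟨?_, ?_, ceil_natCast_rpow_lt_of_le_half hn3 hα2⟩, ?_, hc, hη⟩
  · rw [← hnx]; exact (div_div_lt_ceil_div_zpow hq0 hn0 hlx).le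
  · rw [← hnx]; exact ceil_div_zpow_le_ceil_div hn0.le (rpow_pos_of_pos hn0 _) hxl
  · refine (ceil_log_div_ceil_div_zpow hq hn0 (hc.trans_le ?_)).symm
    exact mul_le_of_le_one_left hn0.le (hη.trans hη2)
end
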